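/- arXiv:1702.01421 — 4 statements merged into one kernel-verified Lean document; each statement's English description precedes it below -/
import Mathlib

section
/- Let h be an n×n real symmetric matrix with Frobenius norm ‖h‖ < n. Then -log det(n·I + h) ≤ -n·log n - tr(h)/n + ‖h‖²/(2n(n - ‖h‖)). -/
/-!
Diagonalize `h`: with eigenvalues `λᵢ` one has `det (n • 1 + h) = ∏ (n + λᵢ)`, `tr h = ∑ λᵢ`,
`∑ᵢⱼ hᵢⱼ² = ∑ λᵢ²`, and hence `|λᵢ| ≤ ‖h‖ < n`. The bound then holds eigenvalue by eigenvalue,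
by the scalar inequality `-log (1 + y) ≤ -y + y² / (2 (1 - a))` for `|y| ≤ a < 1`. For `y ≥ 0`
this follows from `log (1 + y) ≥ 2y / (y + 2)`, and for `y < 0` from `sinh t ≤ t` at
`t = log (1 + y) ≤ 0`, since `sinh (log x) = (x - x⁻¹) / 2`.
-/

open Matrix Unitary

namespace Real

lemma neg_log_one_add_le {a y : ℝ} (ha : a < 1) (hy : |y| ≤ a) :
    -log (1 + y) ≤ -y + y ^ 2 / (2 * (1 - a)) := by
  have hya := abs_le.mp hy
  have hy1 : 0 < 1 + y := by linarith
  rcases le_or_gt 0 y with hy0 | hy0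
  · have hlog := le_log_one_add_of_nonneg hy0
    have hform : 2 * y / (y + 2) = y - y ^ 2 / (y + 2) := by field_simp; ring
    have hquad : y ^ 2 / (y + 2) ≤ y ^ 2 / (2 * (1 - a)) :=
      div_le_div_of_nonneg_left (sq_nonneg y) (by linarith) (by linarith)
    linarith
  · have hlog := sinh_le_self_iff.mpr (log_nonpos hy1.le (by linarith))
    rw [sinh_log hy1] at hlog
    have hform : (1 + y - (1 + y)⁻¹) / 2 = y - y ^ 2 / (2 * (1 + y)) := by field_simp; ring
    have hquad : y ^ 2 / (2 * (1 + y)) ≤ y ^ 2 / (2 * (1 - a)) :=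
      div_le_div_of_nonneg_left (sq_nonneg y) (by linarith) (by linarith)
    linarith

lemma neg_log_add_le {c s l : ℝ} (hsc : s < c) (hl : |l| ≤ s) :
    -log (c + l) ≤ -log c - l / c + l ^ 2 / (2 * c * (c - s)) := by
  have hc : 0 < c := (abs_nonneg l).trans hl |>.trans_lt hsc
  have hscaled := neg_log_one_add_le ((div_lt_one hc).mpr hsc) (y := l / c)
    (by rw [abs_div, abs_of_pos hc]; gcongr)
  have hpos : 0 < 1 + l / c := by
    rw [one_add_div hc.ne']; exact div_pos (by linarith [(abs_le.mp hl).1]) hc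
  have hcs : c - s ≠ 0 := by linarith
  have hform : (l / c) ^ 2 / (2 * (1 - s / c)) = l ^ 2 / (2 * c * (c - s)) := by field_simp
  rw [show c + l = c * (1 + l / c) by field_simp, log_mul hc.ne' hpos.ne']
  linarith

lemma neg_log_prod_add_le {ι : Type*} (t : Finset ι) {c s : ℝ} {l : ι → ℝ} (hsc : s < c)
    (hl : ∀ i ∈ t, |l i| ≤ s) :
    -log (∏ i ∈ t, (c + l i)) ≤
      -t.card * log c - (∑ i ∈ t, l i) / c + (∑ i ∈ t, l i ^ 2) / (2 * c * (c - s)) := by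
  have hpos : ∀ i ∈ t, c + l i ≠ 0 := fun i hi => by
    linarith [(abs_le.mp (hl i hi)).1]
  rw [log_prod hpos, ← Finset.sum_neg_distrib, Finset.sum_div, Finset.sum_div]
  calc ∑ i ∈ t, -log (c + l i)
      ≤ ∑ i ∈ t, (-log c - l i / c + l i ^ 2 / (2 * c * (c - s))) :=
        Finset.sum_le_sum fun i hi => neg_log_add_le hsc (hl i hi)
    _ = _ := by simp only [Finset.sum_add_distrib, Finset.sum_sub_distrib, Finset.sum_const,
        nsmul_eq_mul]; ring

end Real

namespace Matrix

variable {n R : Type*} [Fintype n]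

lemma sum_sq_entries_eq_trace_mul_self [CommSemiring R] {A : Matrix n n R} (hA : A.IsSymm) :
    ∑ i, ∑ j, A i j ^ 2 = (A * A).trace := by
  simp only [trace, diag, mul_apply, sq]
  exact Finset.sum_congr rfl fun i _ => Finset.sum_congr rfl fun j _ => by rw [hA.apply i j]

variable [DecidableEq n]

lemma trace_conjStarAlgAut [CommRing R] [StarRing R] (U : unitary (Matrix n n R))
    (X : Matrix n n R) : (conjStarAlgAut R _ U X).trace = X.trace := by
  rw [conjStarAlgAut_apply, trace_mul_cycle, coe_star_mul_self, one_mul]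

lemma det_conjStarAlgAut [CommRing R] [StarRing R] (U : unitary (Matrix n n R))
    (X : Matrix n n R) : (conjStarAlgAut R _ U X).det = X.det := by
  rw [conjStarAlgAut_apply, ← coe_star,
    det_conj_of_mul_eq_one (coe_mul_star_self U) (coe_star_mul_self U)]

namespace IsHermitian

variable {𝕜 : Type*} [RCLike 𝕜] {A : Matrix n n 𝕜}

lemma trace_mul_self (hA : A.IsHermitian) :
    (A * A).trace = ∑ i, (hA.eigenvalues i : 𝕜) ^ 2 := by
  conv_lhs => rw [hA.spectral_theorem, ← map_mul, trace_conjStarAlgAut, diagonal_mul_diagonal,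
    trace_diagonal]
  simp [sq]

lemma det_smul_one_add (hA : A.IsHermitian) (c : 𝕜) :
    (c • 1 + A).det = ∏ i, (c + hA.eigenvalues i) := by
  conv_lhs => rw [hA.spectral_theorem, ← map_one (conjStarAlgAut 𝕜 _ hA.eigenvectorUnitary),
    ← map_smul, ← map_add, det_conjStarAlgAut, smul_one_eq_diagonal, diagonal_add, det_diagonal]
  rfl

end IsHermitian

end Matrix

theorem stmt1 (n : ℕ) (h : Matrix (Fin n) (Fin n) ℝ) (hsym : h.IsSymm)
    (hnorm : Real.sqrt (∑ i, ∑ j, (h i j) ^ 2) < n) :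
    -Real.log ((n : ℝ) • (1 : Matrix (Fin n) (Fin n) ℝ) + h).det ≤
      -(n : ℝ) * Real.log n - h.trace / n +
        (∑ i, ∑ j, (h i j) ^ 2) /
          (2 * n * (n - Real.sqrt (∑ i, ∑ j, (h i j) ^ 2))) := by
  have hH : h.IsHermitian := isHermitian_iff_isSymm.mpr hsym
  have hsq : ∑ i, ∑ j, h i j ^ 2 = ∑ i, hH.eigenvalues i ^ 2 := by
    simpa using (sum_sq_entries_eq_trace_mul_self hsym).trans hH.trace_mul_self
  have htr : h.trace = ∑ i, hH.eigenvalues i := by simpa using hH.trace_eq_sum_eigenvalues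
  have hbound : ∀ i ∈ Finset.univ, |hH.eigenvalues i| ≤ √(∑ i, ∑ j, h i j ^ 2) := fun i _ =>
    Real.abs_le_sqrt <| hsq ▸ Finset.single_le_sum (fun j _ => sq_nonneg _) (Finset.mem_univ i)
  have key := Real.neg_log_prod_add_le Finset.univ hnorm hbound
  rw [← hsq] at key
  rw [hH.det_smul_one_add, htr]
  simpa using key
end

section
/- Let λ₁, …, λ_r be real numbers with λ₁² + ⋯ + λ_r² < r². Then -∑_{i=1}^r log(1 + λᵢ/r) ≤ -(λ₁ + ⋯ + λ_r)/r + (λ₁² + ⋯ + λ_r²)/(2r(r - √(λ₁² + ⋯ + λ_r²))). -/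
/-!
Beyond its linear term, the series `-log (1 + x) = ∑ (-x)^n / n` has terms of size at most
`|x|^n / 2` (`n ≥ 2`), which sum to `x^2 / (2 (1 - |x|))`. Apply this to `x = λᵢ / r`, using
`|λᵢ| ≤ √(∑ λⱼ²)` to make the denominators uniform, and sum over `i`.
-/

open Finset

theorem neg_log_one_add_le {x : ℝ} (hx : |x| < 1) :
    -Real.log (1 + x) ≤ -x + x ^ 2 / (2 * (1 - |x|)) := by
  have hlog : HasSum (fun n : ℕ => (-x) ^ (n + 2) / (n + 2)) (-Real.log (1 + x) + x) := by
    have := (hasSum_nat_add_iff' 1).mpr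
      (Real.hasSum_pow_div_log_of_abs_lt_one (x := -x) (by rwa [abs_neg]))
    simpa [sub_neg_eq_add, add_assoc, one_add_one_eq_two] using this
  have hgeom : HasSum (fun n : ℕ => |x| ^ (n + 2) / 2) (x ^ 2 / (2 * (1 - |x|))) := by
    have hterms : (fun n : ℕ => |x| ^ (n + 2) / 2) = fun n => x ^ 2 / 2 * |x| ^ n := by
      funext n; rw [← sq_abs x]; ring
    rw [hterms, div_mul_eq_div_mul_one_div, one_div]
    exact (hasSum_geometric_of_lt_one (abs_nonneg x) hx).mul_left _
  have hterm (n : ℕ) : (-x) ^ (n + 2) / (n + 2) ≤ |x| ^ (n + 2) / 2 :=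
    calc (-x) ^ (n + 2) / (n + 2) ≤ |x| ^ (n + 2) / (n + 2) :=
          div_le_div_of_nonneg_right ((le_abs_self _).trans_eq (by rw [abs_pow, abs_neg]))
            (by positivity)
      _ ≤ |x| ^ (n + 2) / 2 := by gcongr; simp
  linarith [hasSum_le hterm hlog hgeom]

theorem neg_log_one_add_div_le {x s r : ℝ} (hxs : |x| ≤ s) (hsr : s < r) :
    -Real.log (1 + x / r) ≤ -x / r + x ^ 2 / (2 * r * (r - s)) := by
  have hr : 0 < r := (abs_nonneg x).trans_lt (hxs.trans_lt hsr)
  have hxr : |x| < r := hxs.trans_lt hsr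
  have h := neg_log_one_add_le (x := x / r) (by rwa [abs_div, abs_of_pos hr, div_lt_one hr])
  have hrewrite : (x / r) ^ 2 / (2 * (1 - |x / r|)) = x ^ 2 / (2 * r * (r - |x|)) := by
    rw [abs_div, abs_of_pos hr]
    field_simp [(sub_pos.2 hxr).ne']
  calc -Real.log (1 + x / r) ≤ -x / r + x ^ 2 / (2 * r * (r - |x|)) := by
        rwa [hrewrite, ← neg_div] at h
    _ ≤ -x / r + x ^ 2 / (2 * r * (r - s)) := by gcongr

theorem neg_sum_log_one_add_div_le {ι : Type*} [Fintype ι] (l : ι → ℝ) {r : ℝ}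
    (h : √(∑ i, l i ^ 2) < r) :
    -∑ i, Real.log (1 + l i / r) ≤
      -(∑ i, l i) / r + (∑ i, l i ^ 2) / (2 * r * (r - √(∑ i, l i ^ 2))) := by
  have hl (i : ι) : |l i| ≤ √(∑ i, l i ^ 2) :=
    Real.abs_le_sqrt (single_le_sum (fun j _ => sq_nonneg (l j)) (mem_univ i))
  calc -∑ i, Real.log (1 + l i / r) = ∑ i, -Real.log (1 + l i / r) := (sum_neg_distrib _).symm
    _ ≤ ∑ i, (-l i / r + l i ^ 2 / (2 * r * (r - √(∑ i, l i ^ 2)))) :=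
        sum_le_sum fun i _ => neg_log_one_add_div_le (hl i) h
    _ = -(∑ i, l i) / r + (∑ i, l i ^ 2) / (2 * r * (r - √(∑ i, l i ^ 2))) := by
        rw [sum_add_distrib, ← sum_div, ← sum_div, sum_neg_distrib]

theorem stmt2 (r : ℕ) (l : Fin r → ℝ) (h : ∑ i, (l i) ^ 2 < (r : ℝ) ^ 2) :
    -∑ i, Real.log (1 + l i / r) ≤
      -(∑ i, l i) / r +
        (∑ i, (l i) ^ 2) / (2 * r * (r - Real.sqrt (∑ i, (l i) ^ 2))) := by
  refine neg_sum_log_one_add_div_le l ?_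
  rw [← Real.sqrt_sq r.cast_nonneg]
  exact Real.sqrt_lt_sqrt (sum_nonneg fun i _ => sq_nonneg (l i)) h
end

section
/- For ρ > 1, the function ψ(z) = -z(ρ-1) + z²ρ²/(2(1-ρz)) on the interval (0, 1/ρ) attains its minimum at z_ρ = 1/ρ - 1/√(ρ(3ρ-2)), and ψ(z_ρ) = √(3 - 2/ρ) + 1/ρ - 2. -/
/-!
Substituting `u = 1 - ρ z` and `s = √(ρ (3ρ - 2))`, one finds the sum-of-squares identity
`ψ(z) - (s/ρ + 1/ρ - 2) = (ρ - u s)² / (2 u ρ²)`, so on `u > 0` the minimum of `ψ` is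
`s/ρ + 1/ρ - 2 = √(3 - 2/ρ) + 1/ρ - 2`, attained where `u = ρ / s`, i.e. at `z = 1/ρ - 1/s`.
-/

open Real

namespace VolumeReduction

noncomputable def ψ (ρ z : ℝ) : ℝ := -z * (ρ - 1) + z ^ 2 * ρ ^ 2 / (2 * (1 - ρ * z))

noncomputable def zOpt (ρ : ℝ) : ℝ := 1 / ρ - 1 / √(ρ * (3 * ρ - 2))

section

variable {ρ : ℝ}

lemma mul_three_mul_sub_two_pos (hρ : 2 / 3 < ρ) : 0 < ρ * (3 * ρ - 2) := by
  nlinarith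

lemma sq_sqrt_mul_three_mul_sub_two (hρ : 2 / 3 < ρ) :
    √(ρ * (3 * ρ - 2)) ^ 2 = ρ * (3 * ρ - 2) :=
  sq_sqrt (mul_three_mul_sub_two_pos hρ).le

lemma lt_sqrt_mul_three_mul_sub_two (hρ : 1 < ρ) : ρ < √(ρ * (3 * ρ - 2)) :=
  lt_sqrt_of_sq_lt (by nlinarith)

lemma sqrt_three_sub_two_div (hρ : 2 / 3 < ρ) : √(3 - 2 / ρ) = √(ρ * (3 * ρ - 2)) / ρ := by
  have hρ0 : 0 < ρ := by linarith
  rw [← sqrt_sq (div_pos (sqrt_pos.mpr (mul_three_mul_sub_two_pos hρ)) hρ0).le, div_pow,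
    sq_sqrt_mul_three_mul_sub_two hρ]
  congr 1
  field_simp

lemma zOpt_mem_Ioo (hρ : 1 < ρ) : zOpt ρ ∈ Set.Ioo 0 (1 / ρ) := by
  have hs := lt_sqrt_mul_three_mul_sub_two hρ
  exact ⟨sub_pos.mpr (one_div_lt_one_div_of_lt (by linarith) hs),
    sub_lt_self _ (one_div_pos.mpr (by linarith))⟩

lemma one_sub_mul_zOpt (hρ : 2 / 3 < ρ) : 1 - ρ * zOpt ρ = ρ / √(ρ * (3 * ρ - 2)) := by
  have hρ0 : ρ ≠ 0 := by positivity
  unfold zOpt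
  field_simp
  ring

lemma ψ_zOpt (hρ : 2 / 3 < ρ) :
    ψ ρ (zOpt ρ) = √(ρ * (3 * ρ - 2)) / ρ + 1 / ρ - 2 := by
  have hs2 := sq_sqrt_mul_three_mul_sub_two hρ
  have hs0 : √(ρ * (3 * ρ - 2)) ≠ 0 := (sqrt_pos.mpr (mul_three_mul_sub_two_pos hρ)).ne'
  have hρ0 : ρ ≠ 0 := by positivity
  rw [ψ, one_sub_mul_zOpt hρ, zOpt]
  generalize √(ρ * (3 * ρ - 2)) = s at *
  field_simp
  linear_combination (-1) * hs2

lemma ψ_sub_ψ_zOpt (hρ : 2 / 3 < ρ) {z : ℝ} (hz : 1 - ρ * z ≠ 0) :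
    ψ ρ z - ψ ρ (zOpt ρ) =
      (ρ - (1 - ρ * z) * √(ρ * (3 * ρ - 2))) ^ 2 / (2 * (1 - ρ * z) * ρ ^ 2) := by
  have hs2 := sq_sqrt_mul_three_mul_sub_two hρ
  have hρ0 : ρ ≠ 0 := by positivity
  have hz' : 1 - z * ρ ≠ 0 := by rwa [mul_comm]
  rw [ψ_zOpt hρ, ψ]
  generalize √(ρ * (3 * ρ - 2)) = s at *
  field_simp
  linear_combination (-(1 - ρ * z) ^ 2) * hs2

lemma ψ_zOpt_le (hρ : 2 / 3 < ρ) {z : ℝ} (hz : 0 < 1 - ρ * z) : ψ ρ (zOpt ρ) ≤ ψ ρ z := by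
  rw [← sub_nonneg, ψ_sub_ψ_zOpt hρ hz.ne']
  positivity

end

end VolumeReduction

open VolumeReduction in
theorem stmt3 (ρ : ℝ) (hρ : 1 < ρ) :
    (1 / ρ - 1 / Real.sqrt (ρ * (3 * ρ - 2))) ∈ Set.Ioo 0 (1 / ρ) ∧
    (∀ z ∈ Set.Ioo (0 : ℝ) (1 / ρ),
      -(1 / ρ - 1 / Real.sqrt (ρ * (3 * ρ - 2))) * (ρ - 1) +
          (1 / ρ - 1 / Real.sqrt (ρ * (3 * ρ - 2))) ^ 2 * ρ ^ 2 /
            (2 * (1 - ρ * (1 / ρ - 1 / Real.sqrt (ρ * (3 * ρ - 2))))) ≤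
        -z * (ρ - 1) + z ^ 2 * ρ ^ 2 / (2 * (1 - ρ * z))) ∧
    -(1 / ρ - 1 / Real.sqrt (ρ * (3 * ρ - 2))) * (ρ - 1) +
        (1 / ρ - 1 / Real.sqrt (ρ * (3 * ρ - 2))) ^ 2 * ρ ^ 2 /
          (2 * (1 - ρ * (1 / ρ - 1 / Real.sqrt (ρ * (3 * ρ - 2))))) =
      Real.sqrt (3 - 2 / ρ) + 1 / ρ - 2 := by
  have hρ' : 2 / 3 < ρ := by linarith
  refine ⟨zOpt_mem_Ioo hρ, fun z hz => ψ_zOpt_le hρ' ?_, ?_⟩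
  · have hρz := (lt_div_iff₀ (by linarith : (0 : ℝ) < ρ)).mp hz.2
    linarith
  · change ψ ρ (zOpt ρ) = _
    rw [ψ_zOpt hρ', sqrt_three_sub_two_div hρ']
end

section
/- Let ρ > 1 and y a nonzero positive semidefinite n×n symmetric matrix. Set z = 1/ρ - 1/√(ρ(3ρ-2)), β = n - z, and w = ((n-β)/tr(y))·ρn·y + β·I = z·(ρn·y/tr(y)) + (n - z)·I. Then w is positive definite and log det w ≥ n log n + (2 - 1/ρ - √(3 - 2/ρ)), so (n / (det w)^{1/n}) ≤ exp(-(2 - 1/ρ - √(3 - 2/ρ))/n) < 1. -/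
open Matrix Real

section auxs

lemma aux_integral_line (t c : ℝ) :
    ∫ x in (1:ℝ)..(1+t), (1 + (1-x)*c) = t - t^2*c/2 := by
  have h : ∀ x : ℝ, 1 + (1-x)*c = (1 + c) - x * c := fun x => by ring
  simp_rw [h]
  rw [intervalIntegral.integral_sub (continuous_const.intervalIntegrable _ _)
    ((by continuity : Continuous fun x : ℝ => x * c).intervalIntegrable _ _),
    intervalIntegral.integral_const, intervalIntegral.integral_mul_const, integral_id]
  simp only [smul_eq_mul]
  ring

lemma aux_log {r t : ℝ} (hr1 : r < 1) (ht : |t| ≤ r) :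
    t - t^2 / (2*(1-r)) ≤ Real.log (1+t) := by
  have hr0 : 0 ≤ r := (abs_nonneg t).trans ht
  obtain ⟨htl, htu⟩ := abs_le.mp ht
  have h1t : 0 < 1 + t := by linarith
  have hcc : (0:ℝ) < 1 - r := by linarith
  set c := (1-r)⁻¹ with hcdef
  have hcpos : 0 < c := inv_pos.mpr hcc
  have hcr : c * (1-r) = 1 := inv_mul_cancel₀ (ne_of_gt hcc)
  have hlog : Real.log (1+t) = ∫ x in (1:ℝ)..(1+t), x⁻¹ := by
    rw [integral_inv_of_pos one_pos h1t, div_one]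
  have hrhs : t - t^2 / (2*(1-r)) = t - t^2 * c / 2 := by
    rw [hcdef]; field_simp
  have hint : IntervalIntegrable (fun x : ℝ => x⁻¹) MeasureTheory.volume 1 (1+t) := by
    apply intervalIntegral.intervalIntegrable_inv
    · intro x hx
      rcases Set.mem_uIcc.mp hx with ⟨h1, _⟩ | ⟨h1, _⟩ <;> intro hx0 <;> simp [hx0] at h1 <;>
        linarith
    · exact continuousOn_id
  have hline : IntervalIntegrable (fun x : ℝ => 1 + (1-x)*c) MeasureTheory.volume 1 (1+t) :=
    (by continuity : Continuous fun x : ℝ => 1 + (1-x)*c).intervalIntegrable _ _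
  rw [hlog, hrhs, ← aux_integral_line t c]
  rcases le_total 0 t with h0 | h0
  · apply intervalIntegral.integral_mono_on (by linarith) hline hint
    intro x hx
    have hx1 : (1:ℝ) ≤ x := hx.1
    have hxp : (0:ℝ) < x := by linarith
    rw [← one_div, le_div_iff₀ hxp]
    have h1 : 1 ≤ c * x := by
      calc 1 = c * (1-r) := hcr.symm
      _ ≤ c * x := by nlinarith
    nlinarith [mul_nonneg (sub_nonneg.mpr hx1) (sub_nonneg.mpr h1)]
  · have e1 : (∫ x in (1:ℝ)..(1+t), (1 + (1-x)*c)) = -∫ x in (1+t)..(1:ℝ), (1 + (1-x)*c) :=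
      intervalIntegral.integral_symm (1+t) 1
    have e2 : (∫ x in (1:ℝ)..(1+t), x⁻¹) = -∫ x in (1+t)..(1:ℝ), x⁻¹ :=
      intervalIntegral.integral_symm (1+t) 1
    have hm : (∫ x in (1+t)..(1:ℝ), x⁻¹) ≤ ∫ x in (1+t)..(1:ℝ), (1 + (1-x)*c) := by
      apply intervalIntegral.integral_mono_on (by linarith) hint.symm hline.symm
      intro x hx
      have hx1 : x ≤ 1 := hx.2
      have hxr : 1 - r ≤ x := by have := hx.1; linarith
      have hxp : (0:ℝ) < x := by linarith
      rw [← one_div, div_le_iff₀ hxp]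
      have h1 : c * x - 1 = c * (x - (1-r)) := by rw [mul_sub, hcr]
      nlinarith [mul_nonneg (sub_nonneg.mpr hx1) (by nlinarith : (0:ℝ) ≤ c * x - 1)]
    linarith

lemma aux_spec {n : ℕ} (y : Matrix (Fin n) (Fin n) ℝ) (hy : y.IsHermitian) :
    y = (hy.eigenvectorUnitary : Matrix (Fin n) (Fin n) ℝ) * diagonal hy.eigenvalues *
      star (hy.eigenvectorUnitary : Matrix (Fin n) (Fin n) ℝ) := by
  have := hy.spectral_theorem
  simpa using this

lemma aux_det {n : ℕ} (y : Matrix (Fin n) (Fin n) ℝ) (hy : y.IsHermitian) (a b : ℝ) :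
    (a • y + b • (1 : Matrix (Fin n) (Fin n) ℝ)).det
      = ∏ i, (a * hy.eigenvalues i + b) := by
  have hU1 : (hy.eigenvectorUnitary : Matrix (Fin n) (Fin n) ℝ) *
      star (hy.eigenvectorUnitary : Matrix (Fin n) (Fin n) ℝ) = 1 :=
    (Matrix.mem_unitaryGroup_iff).mp hy.eigenvectorUnitary.2
  have hU2 : star (hy.eigenvectorUnitary : Matrix (Fin n) (Fin n) ℝ) *
      (hy.eigenvectorUnitary : Matrix (Fin n) (Fin n) ℝ) = 1 :=
    (Matrix.mem_unitaryGroup_iff').mp hy.eigenvectorUnitary.2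
  have hd : diagonal (fun i => a * hy.eigenvalues i + b)
      = a • diagonal hy.eigenvalues + b • (1 : Matrix (Fin n) (Fin n) ℝ) := by
    ext i j
    by_cases h : i = j <;> simp [Matrix.diagonal_apply, Matrix.one_apply, h]
  have key : a • y + b • (1 : Matrix (Fin n) (Fin n) ℝ)
      = (hy.eigenvectorUnitary : Matrix (Fin n) (Fin n) ℝ) *
        diagonal (fun i => a * hy.eigenvalues i + b) *
        star (hy.eigenvectorUnitary : Matrix (Fin n) (Fin n) ℝ) := by
    conv_lhs => rw [aux_spec y hy]
    rw [hd]
    simp [Matrix.mul_add, Matrix.add_mul, Matrix.mul_smul, Matrix.smul_mul, hU1,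
      Matrix.mul_assoc]
  rw [key, Matrix.det_mul, Matrix.det_mul, mul_comm, ← mul_assoc, ← Matrix.det_mul, hU2]
  simp [Matrix.det_diagonal]

lemma aux_trace {n : ℕ} (y : Matrix (Fin n) (Fin n) ℝ) (hy : y.IsHermitian) :
    y.trace = ∑ i, hy.eigenvalues i := by
  have hU2 : star (hy.eigenvectorUnitary : Matrix (Fin n) (Fin n) ℝ) *
      (hy.eigenvectorUnitary : Matrix (Fin n) (Fin n) ℝ) = 1 :=
    (Matrix.mem_unitaryGroup_iff').mp hy.eigenvectorUnitary.2
  conv_lhs => rw [aux_spec y hy]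
  rw [Matrix.trace_mul_cycle, hU2, Matrix.one_mul, Matrix.trace_diagonal]

end auxs


set_option maxHeartbeats 1000000 in
lemma aux_scalar {n : ℕ} (hn : 0 < n) {ρ S z r T : ℝ} (hρ : 1 < ρ) (hS1 : 1 < S)
    (hS2 : S^2 = 3 - 2/ρ) (hzρ : r = 1 - 1/S) (hrdef : r = z * ρ) (hT0 : 0 < T)
    (μ : Fin n → ℝ) (hμ0 : ∀ i, 0 ≤ μ i) (hT : T = ∑ i, μ i) :
    (∀ i, 0 < z * (ρ * (n:ℝ)) / T * μ i + ((n:ℝ) - z)) ∧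
    (n:ℝ) * Real.log n + (2 - 1/ρ - S) ≤
      ∑ i, Real.log (z * (ρ * (n:ℝ)) / T * μ i + ((n:ℝ) - z)) := by
  have hρ0 : (0:ℝ) < ρ := by linarith
  have hn1 : (1:ℝ) ≤ (n:ℝ) := by exact_mod_cast hn
  have hn0 : (0:ℝ) < (n:ℝ) := by linarith
  have hS0 : (0:ℝ) < S := by linarith
  have hr0 : 0 < r := by
    rw [hzρ]
    have : 1/S < 1 := by rw [div_lt_one hS0]; exact hS1
    linarith
  have hr1 : r < 1 := by
    rw [hzρ]
    have : 0 < 1/S := by positivity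
    linarith
  have hz0 : 0 < z := by nlinarith
  have hz1 : z < 1 := by nlinarith
  set a := z * (ρ * (n:ℝ)) / T with hadef
  have ha0 : 0 ≤ a := by rw [hadef]; positivity
  have haT : a * T = r * (n:ℝ) := by
    rw [hadef, div_mul_cancel₀ _ (ne_of_gt hT0), hrdef]; ring
  set b := (n:ℝ) - z with hbdef
  have hb0 : 0 < b := by rw [hbdef]; linarith
  set x : Fin n → ℝ := fun i => (a * μ i - z) / (n:ℝ) with hxdef
  have hxval : ∀ i, x i = (a * μ i - z) / (n:ℝ) := fun i => by rw [hxdef]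
  have hμT : ∀ i, μ i ≤ T := by
    intro i
    rw [hT]
    exact Finset.single_le_sum (fun j _ => hμ0 j) (Finset.mem_univ i)
  have haμ : ∀ i, a * μ i ≤ r * n := fun i => by
    calc a * μ i ≤ a * T := mul_le_mul_of_nonneg_left (hμT i) ha0
    _ = r * n := haT
  have hxabs : ∀ i, |x i| ≤ r := by
    intro i
    rw [abs_le]
    constructor
    · rw [hxval i, le_div_iff₀ hn0]
      nlinarith [mul_nonneg ha0 (hμ0 i), mul_nonneg hz0.le (sub_nonneg.mpr hρ.le),
        mul_nonneg hr0.le (sub_nonneg.mpr hn1)]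
    · rw [hxval i, div_le_iff₀ hn0]
      nlinarith [haμ i, hz0, mul_nonneg hr0.le (sub_nonneg.mpr hn1)]
  have hx1 : ∀ i, 0 < 1 + x i := fun i => by
    have := (abs_le.mp (hxabs i)).1; linarith
  have hfac : ∀ i, a * μ i + b = (n:ℝ) * (1 + x i) := fun i => by
    rw [hxval i, hbdef]; field_simp; ring
  have hposf : ∀ i, 0 < a * μ i + b := fun i => by
    rw [hfac i]; exact mul_pos hn0 (hx1 i)
  have hsx : ∑ i, x i = z * (ρ - 1) := by
    simp_rw [hxval]
    rw [← Finset.sum_div, Finset.sum_sub_distrib, ← Finset.mul_sum, ← hT,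
      Finset.sum_const, Finset.card_univ, Fintype.card_fin, nsmul_eq_mul, haT, hrdef]
    field_simp
  have hμsq : ∑ i, (μ i)^2 ≤ T^2 := by
    calc ∑ i, (μ i)^2 ≤ ∑ i, μ i * T :=
          Finset.sum_le_sum (fun i _ => by
            rw [pow_two]; exact mul_le_mul_of_nonneg_left (hμT i) (hμ0 i))
    _ = T^2 := by rw [← Finset.sum_mul, ← hT]; ring
  have hsum2 : ∑ i, (a * μ i - z)^2 = a^2 * (∑ i, (μ i)^2) - (2*a*z)*T + (n:ℝ)*z^2 := by
    have he : ∀ i, (a*μ i - z)^2 = a^2*(μ i)^2 - (2*a*z)*(μ i) + z^2 := fun i => by ring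
    simp_rw [he]
    rw [Finset.sum_add_distrib, Finset.sum_sub_distrib, ← Finset.mul_sum, ← Finset.mul_sum,
      Finset.sum_const, Finset.card_univ, Fintype.card_fin, nsmul_eq_mul, ← hT]
  have hsx2 : ∑ i, (x i)^2 ≤ r^2 := by
    simp_rw [hxval, div_pow]
    rw [← Finset.sum_div, div_le_iff₀ (by positivity : (0:ℝ) < (n:ℝ)^2), hsum2]
    have h1 : a^2 * (∑ i, (μ i)^2) ≤ a^2 * T^2 := mul_le_mul_of_nonneg_left hμsq (sq_nonneg a)
    have h2 : a^2 * T^2 = r^2 * (n:ℝ)^2 := by rw [show a^2*T^2 = (a*T)^2 by ring, haT]; ring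
    have h3 : (2*a*z)*T = 2*z*(r*(n:ℝ)) := by rw [← haT]; ring
    have h4 : (n:ℝ)*z^2 ≤ 2*z*(r*(n:ℝ)) := by
      rw [hrdef]
      nlinarith [mul_pos (mul_pos hz0 hz0) hn0]
    linarith
  have hsum_log : z*(ρ-1) - r^2/(2*(1-r)) ≤ ∑ i, Real.log (1 + x i) := by
    have h1 : ∑ i, (x i - (x i)^2/(2*(1-r))) ≤ ∑ i, Real.log (1 + x i) :=
      Finset.sum_le_sum (fun i _ => aux_log hr1 (hxabs i))
    have h2 : ∑ i, (x i - (x i)^2/(2*(1-r))) = (∑ i, x i) - (∑ i, (x i)^2)/(2*(1-r)) := by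
      rw [Finset.sum_sub_distrib, Finset.sum_div]
    have h3 : (∑ i, (x i)^2)/(2*(1-r)) ≤ r^2/(2*(1-r)) :=
      (div_le_div_iff_of_pos_right (by linarith : (0:ℝ) < 2*(1-r))).mpr hsx2
    rw [h2, hsx] at h1
    linarith
  have hρS2 : ρ * S^2 = 3*ρ - 2 := by rw [hS2]; field_simp
  have hrS : r = (S-1)/S := by rw [hzρ]; field_simp
  have hzS : z = (S-1)/(S*ρ) := by
    have hzr : z = r/ρ := by rw [hrdef]; field_simp
    rw [hzr, hrS, div_div]
  have h1rS : 1 - r = 1/S := by rw [hrS]; field_simp; ring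
  have halg : z*(ρ-1) - r^2/(2*(1-r)) = 2 - 1/ρ - S := by
    rw [hzS, h1rS, hrS]
    field_simp
    linear_combination hρS2
  refine ⟨hposf, ?_⟩
  have hlm : ∀ i, Real.log (a * μ i + b) = Real.log n + Real.log (1 + x i) := fun i => by
    rw [hfac i, Real.log_mul hn0.ne' (hx1 i).ne']
  simp_rw [hlm]
  rw [Finset.sum_add_distrib, Finset.sum_const, Finset.card_univ, Fintype.card_fin,
    nsmul_eq_mul]
  linarith [hsum_log, halg.ge, halg.le]

set_option maxHeartbeats 1000000 in
theorem stmt14 (n : ℕ) (hn : 0 < n) (ρ : ℝ) (hρ : 1 < ρ)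
    (y : Matrix (Fin n) (Fin n) ℝ) (hy : y.PosSemidef) (hy0 : y ≠ 0) :
    (((1 / ρ - 1 / Real.sqrt (ρ * (3 * ρ - 2))) * (ρ * (n : ℝ)) / y.trace) • y +
        ((n : ℝ) - (1 / ρ - 1 / Real.sqrt (ρ * (3 * ρ - 2)))) •
          (1 : Matrix (Fin n) (Fin n) ℝ)).PosDef ∧
    (n : ℝ) * Real.log n + (2 - 1 / ρ - Real.sqrt (3 - 2 / ρ)) ≤
      Real.log (((1 / ρ - 1 / Real.sqrt (ρ * (3 * ρ - 2))) * (ρ * (n : ℝ)) / y.trace) • y +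
        ((n : ℝ) - (1 / ρ - 1 / Real.sqrt (ρ * (3 * ρ - 2)))) •
          (1 : Matrix (Fin n) (Fin n) ℝ)).det ∧
    (n : ℝ) / (((1 / ρ - 1 / Real.sqrt (ρ * (3 * ρ - 2))) * (ρ * (n : ℝ)) / y.trace) • y +
        ((n : ℝ) - (1 / ρ - 1 / Real.sqrt (ρ * (3 * ρ - 2)))) •
          (1 : Matrix (Fin n) (Fin n) ℝ)).det ^ ((1 : ℝ) / n) ≤
      Real.exp (-(2 - 1 / ρ - Real.sqrt (3 - 2 / ρ)) / n) ∧
    Real.exp (-(2 - 1 / ρ - Real.sqrt (3 - 2 / ρ)) / n) < 1 := by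
  have hρ0 : (0:ℝ) < ρ := by linarith
  have hn1 : (1:ℝ) ≤ (n:ℝ) := by exact_mod_cast hn
  have hn0 : (0:ℝ) < (n:ℝ) := by linarith
  set S := Real.sqrt (3 - 2/ρ) with hSdef
  have h32 : (1:ℝ) < 3 - 2/ρ := by
    have : 2/ρ < 2 := by rw [div_lt_iff₀ hρ0]; nlinarith
    linarith
  have hS2 : S^2 = 3 - 2/ρ := Real.sq_sqrt (by linarith)
  have hS1 : 1 < S := by
    rw [hSdef, show (1:ℝ) = Real.sqrt 1 from Real.sqrt_one.symm]
    exact Real.sqrt_lt_sqrt (by norm_num) h32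
  have hS0 : (0:ℝ) < S := by linarith
  have hsqrt : Real.sqrt (ρ * (3 * ρ - 2)) = ρ * S := by
    rw [hSdef, show ρ * (3 * ρ - 2) = ρ^2 * (3 - 2/ρ) by field_simp,
      Real.sqrt_mul (sq_nonneg ρ), Real.sqrt_sq hρ0.le]
  rw [hsqrt]
  set z := 1/ρ - 1/(ρ*S) with hzdef
  have hzρ : z * ρ = 1 - 1/S := by rw [hzdef]; field_simp
  have h1Slt : 1/S < 1 := by rw [div_lt_one hS0]; exact hS1
  have h1Spos : 0 < 1/S := by positivity
  have hzρpos : 0 < z * ρ := by rw [hzρ]; linarith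
  have hzρlt : z * ρ < 1 := by rw [hzρ]; linarith
  have hz0 : 0 < z := by
    rcases mul_pos_iff.mp hzρpos with ⟨h, _⟩ | ⟨_, h⟩
    · exact h
    · linarith
  have hz1 : z < 1 := by nlinarith [mul_pos hz0 (sub_pos.mpr hρ)]
  have hT : y.trace = ∑ i, hy.1.eigenvalues i := aux_trace y hy.1
  set μ := hy.1.eigenvalues with hμdef
  have hμ0 : ∀ i, 0 ≤ μ i := fun i => hy.eigenvalues_nonneg i
  have hT0 : 0 < y.trace := by
    rcases lt_or_eq_of_le (Finset.sum_nonneg (fun i _ => hμ0 i)) with h | h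
    · rw [hT]; exact h
    · exfalso
      apply hy0
      have hall : ∀ i ∈ Finset.univ, μ i = 0 :=
        (Finset.sum_eq_zero_iff_of_nonneg (fun i _ => hμ0 i)).mp h.symm
      have : diagonal μ = 0 := by
        ext i j; by_cases hij : i = j <;> simp [Matrix.diagonal_apply, hij, hall]
      rw [aux_spec y hy.1, ← hμdef, this]
      simp
  set T := y.trace with hTdef
  set a := z * (ρ * (n:ℝ)) / T with hadef
  set b := (n:ℝ) - z with hbdef
  have ha0 : 0 ≤ a := by rw [hadef]; positivity
  have hb0 : 0 < b := by rw [hbdef]; linarith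
  -- Part 1 : PosDef
  have hpsd : (a • y).PosSemidef := by
    constructor
    · show (a • y)ᴴ = a • y
      rw [Matrix.conjTranspose_smul, star_trivial, hy.1.eq]
    · intro x
      exact (hy.smul ha0).2 x
  have hpd : (b • (1 : Matrix (Fin n) (Fin n) ℝ)).PosDef := by
    have h1 : b • (1 : Matrix (Fin n) (Fin n) ℝ) = diagonal (fun _ => b) := by
      ext i j; by_cases hij : i = j <;> simp [Matrix.one_apply, Matrix.diagonal_apply, hij]
    rw [h1]
    exact Matrix.posDef_diagonal_iff.mpr (fun _ => hb0)
  have hPD : (a • y + b • (1 : Matrix (Fin n) (Fin n) ℝ)).PosDef :=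
    Matrix.PosDef.posSemidef_add hpsd hpd
  -- Part 2 : log det bound
  have hdet : (a • y + b • (1 : Matrix (Fin n) (Fin n) ℝ)).det = ∏ i, (a * μ i + b) :=
    aux_det y hy.1 a b
  obtain ⟨hposf, hsum⟩ := aux_scalar hn hρ hS1 hS2 hzρ rfl hT0 μ hμ0 hT
  have h2log : (n:ℝ) * Real.log n + (2 - 1/ρ - S) ≤
      Real.log ((a • y + b • (1 : Matrix (Fin n) (Fin n) ℝ)).det) := by
    rw [hdet, Real.log_prod (fun i _ => (hposf i).ne')]
    exact hsum
  refine ⟨hPD, h2log, ?_, ?_⟩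
  · -- rpow bound
    have hD0 : 0 < (a • y + b • (1 : Matrix (Fin n) (Fin n) ℝ)).det := hPD.det_pos
    have hDr : (0:ℝ) < (a • y + b • (1 : Matrix (Fin n) (Fin n) ℝ)).det ^ ((1:ℝ)/(n:ℝ)) :=
      Real.rpow_pos_of_pos hD0 _
    have hlhs : (n:ℝ)/(a • y + b • (1 : Matrix (Fin n) (Fin n) ℝ)).det ^ ((1:ℝ)/(n:ℝ))
        = Real.exp (Real.log n - (1/(n:ℝ)) *
            Real.log ((a • y + b • (1 : Matrix (Fin n) (Fin n) ℝ)).det)) := by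
      rw [Real.exp_sub, Real.exp_log hn0, ← Real.log_rpow hD0, Real.exp_log hDr]
    rw [hlhs]
    apply Real.exp_le_exp.mpr
    have e : -(2 - 1/ρ - S)/(n:ℝ) - (Real.log n - (1/(n:ℝ)) *
          Real.log ((a • y + b • (1 : Matrix (Fin n) (Fin n) ℝ)).det))
        = (Real.log ((a • y + b • (1 : Matrix (Fin n) (Fin n) ℝ)).det)
            - ((n:ℝ)*Real.log n + (2 - 1/ρ - S)))/(n:ℝ) := by
      field_simp
      ring
    have hq : 0 ≤ (Real.log ((a • y + b • (1 : Matrix (Fin n) (Fin n) ℝ)).det)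
        - ((n:ℝ)*Real.log n + (2 - 1/ρ - S)))/(n:ℝ) :=
      div_nonneg (by linarith only [h2log]) hn0.le
    linarith only [e, hq]
  · -- exp < 1
    have h2ρ : 2/ρ = 3 - S^2 := by linarith [hS2]
    have h1ρ : 1/ρ = (3 - S^2)/2 := by rw [show (3 - S^2) = 2/ρ from h2ρ.symm]; ring
    have hφ : 0 < 2 - 1/ρ - S := by
      nlinarith [mul_pos (sub_pos.mpr hS1) (sub_pos.mpr hS1)]
    exact Real.exp_lt_one_iff.mpr (div_neg_of_neg_of_pos (by linarith) hn0)
end
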